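/- arXiv:1705.09773 — 6 statements merged into one kernel-verified Lean document; each statement's English description precedes it below -/
import Mathlib

section
/- Let G be a graph and let Z ⊆ V(G) be a zero forcing set for G. Then M(G) ≤ |Z|; in particular M(G) ≤ Z(G). -/
open Matrix Finset

variable {V : Type*}

/-- `A` is a real symmetric matrix whose off-diagonal nonzero pattern is given by `G`. -/
def IsGraphMatrix [Fintype V] (G : SimpleGraph V) (A : Matrix V V ℝ) : Prop :=
  A.IsSymm ∧ ∀ i j : V, i ≠ j → (A i j ≠ 0 ↔ G.Adj i j)

/-- The nullity of a square real matrix. -/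
noncomputable def nullity [Fintype V] (A : Matrix V V ℝ) : ℕ :=
  Fintype.card V - A.rank

/-- The minimum rank of a graph. -/
noncomputable def minRank [Fintype V] (G : SimpleGraph V) : ℕ :=
  sInf {r : ℕ | ∃ A : Matrix V V ℝ, IsGraphMatrix G A ∧ A.rank = r}

/-- The maximum nullity of a graph. -/
noncomputable def maxNullity [Fintype V] (G : SimpleGraph V) : ℕ :=
  sSup {k : ℕ | ∃ A : Matrix V V ℝ, IsGraphMatrix G A ∧ nullity A = k}

/-- The set of vertices eventually colored black by the color-change rule,
starting from the initially black set `Z`. A black vertex `u` with exactly one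
white neighbor `v` forces `v` black. -/
inductive ZForced (G : SimpleGraph V) (Z : Set V) : V → Prop
  | init : ∀ {v}, v ∈ Z → ZForced G Z v
  | force : ∀ {u v}, G.Adj u v → ZForced G Z u →
      (∀ w, G.Adj u w → w ≠ v → ZForced G Z w) → ZForced G Z v

/-- `Z` is a zero forcing set for `G`. -/
def IsZeroForcingSet (G : SimpleGraph V) (Z : Set V) : Prop :=
  ∀ v : V, ZForced G Z v

/-- The zero forcing number of `G`. -/
noncomputable def zeroForcingNumber [Fintype V] (G : SimpleGraph V) : ℕ :=
  sInf {k : ℕ | ∃ Z : Finset V, Z.card = k ∧ IsZeroForcingSet G ↑Z}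


lemma zforced_vanish [Fintype V] (G : SimpleGraph V)
    (A : Matrix V V ℝ) (hA : IsGraphMatrix G A) (x : V → ℝ) (hx : A.mulVec x = 0)
    (Z : Set V) (hZ : ∀ v ∈ Z, x v = 0) : ∀ v, ZForced G Z v → x v = 0 := by
  intro v h
  induction h with
  | init hv => exact hZ _ hv
  | @force u v hadj hu hw ihu ihw =>
    have huv : (A.mulVec x) u = 0 := by rw [hx]; rfl
    have hsum : ∑ j, A u j * x j = A u v * x v := by
      refine Finset.sum_eq_single v (fun j _ hj => ?_) (by simp)
      by_cases hju : j = u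
      · subst hju; rw [ihu, mul_zero]
      · by_cases hadj' : G.Adj u j
        · rw [ihw j hadj' hj, mul_zero]
        · have : A u j = 0 := by
            by_contra hne
            exact hadj' (((hA.2 u j) (Ne.symm hju)).1 hne)
          rw [this, zero_mul]
    have hAuv : A u v ≠ 0 := ((hA.2 u v hadj.ne).2 hadj)
    have : A u v * x v = 0 := by
      rw [← hsum]; simpa [Matrix.mulVec, dotProduct] using huv
    exact (mul_eq_zero.1 this).resolve_left hAuv

lemma nullity_le_of_zfs [Fintype V] [DecidableEq V] (G : SimpleGraph V)
    (A : Matrix V V ℝ) (hA : IsGraphMatrix G A) (Z : Finset V)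
    (hZ : IsZeroForcingSet G ↑Z) : nullity A ≤ Z.card := by
  have hrn : A.rank + Module.finrank ℝ (LinearMap.ker A.mulVecLin)
      = Fintype.card V := by
    have := LinearMap.finrank_range_add_finrank_ker A.mulVecLin
    simpa [Matrix.rank, Module.finrank_fintype_fun_eq_card] using this
  have hnull : nullity A = Module.finrank ℝ (LinearMap.ker A.mulVecLin) := by
    unfold nullity; omega
  rw [hnull]
  let f : LinearMap.ker A.mulVecLin →ₗ[ℝ] ({z // z ∈ Z} → ℝ) :=
    { toFun := fun x => fun z => x.1 z.1
      map_add' := fun x y => rfl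
      map_smul' := fun c x => rfl }
  have hinj : Function.Injective f := by
    intro x y hxy
    ext v
    have hx : A.mulVec (x.1 - y.1) = 0 := by
      have hx1 : A.mulVecLin x.1 = 0 := x.2
      have hy1 : A.mulVecLin y.1 = 0 := y.2
      have : A.mulVecLin (x.1 - y.1) = 0 := by rw [map_sub, hx1, hy1, sub_zero]
      simpa [Matrix.mulVecLin] using this
    have hvan : ∀ w ∈ (Z : Set V), (x.1 - y.1) w = 0 := by
      intro w hw
      have := congrFun hxy ⟨w, hw⟩
      simpa [f, sub_eq_zero] using this
    have := zforced_vanish G A hA (x.1 - y.1) hx (↑Z) hvan v (hZ v)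
    have : x.1 v = y.1 v := by
      have h2 := this
      simpa [sub_eq_zero] using h2
    exact this
  calc Module.finrank ℝ (LinearMap.ker A.mulVecLin)
      ≤ Module.finrank ℝ ({z // z ∈ Z} → ℝ) :=
        LinearMap.finrank_le_finrank_of_injective hinj
    _ = Z.card := by
        rw [Module.finrank_fintype_fun_eq_card]
        simp

/-- If `Z` is a zero forcing set for `G`, then `M(G) ≤ |Z|`; in particular
`M(G) ≤ Z(G)`. -/
theorem maxNullity_le_card_zeroForcingSet {V : Type*} [Fintype V] [DecidableEq V]
    (G : SimpleGraph V) :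
    (∀ Z : Finset V, IsZeroForcingSet G ↑Z → maxNullity G ≤ Z.card) ∧
    maxNullity G ≤ zeroForcingNumber G := by
  have main : ∀ Z : Finset V, IsZeroForcingSet G ↑Z → maxNullity G ≤ Z.card := by
    intro Z hZ
    refine csSup_le' ?_
    rintro k ⟨A, hA, rfl⟩
    exact nullity_le_of_zfs G A hA Z hZ
  refine ⟨main, ?_⟩
  have hne : {k : ℕ | ∃ Z : Finset V, Z.card = k ∧ IsZeroForcingSet G ↑Z}.Nonempty := by
    refine ⟨(Finset.univ : Finset V).card, Finset.univ, rfl, fun v => ?_⟩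
    exact ZForced.init (by simp)
  obtain ⟨Z, hcard, hZ⟩ := Nat.sInf_mem hne
  rw [zeroForcingNumber, ← hcard]
  exact main Z hZ
end

section
/- Let G be a connected graph with minimum degree at least 3. If G has a cut edge (bridge), then Z(G) ≥ 4 (equivalently, Z(G) = 3 implies G has no cut edge). -/
open Matrix Finset

variable {V : Type*}

/-!
Let `Z` be a zero forcing set with `|Z| ≤ 3 ≤ δ(G)`. The first force is made by a vertex `u` all of
whose neighbours but one are initially black, so `Z` consists of `u` and all but one neighbour of
`u`. Let `xy` be the bridge, and say `u` is not joined to `y` in `G - xy`. The vertices other than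
`y` in the component of `y` are initially white, and can only be forced from inside it or from `y`;
but `y` has at least two neighbours there, so nothing in it is ever forced.
-/

open SimpleGraph

theorem le_zeroForcingNumber [Fintype V] {G : SimpleGraph V} {k : ℕ}
    (h : ∀ Z : Finset V, IsZeroForcingSet G Z → k ≤ Z.card) : k ≤ zeroForcingNumber G :=
  le_csInf ⟨_, Finset.univ, rfl, fun _ => ZForced.init (Finset.mem_coe.2 (Finset.mem_univ _))⟩
    (by rintro k ⟨Z, rfl, hZ⟩; exact h Z hZ)

namespace ZForced

variable {G : SimpleGraph V} {Z : Set V}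

theorem exists_first_force {v : V} (hv : ZForced G Z v) (hvZ : v ∉ Z) :
    ∃ u ∈ Z, ∃ v' ∉ Z, G.Adj u v' ∧ ∀ w, G.Adj u w → w ≠ v' → w ∈ Z := by
  induction hv with
  | init hv => exact absurd hv hvZ
  | @force u v huv _ _ ih_u ih_ws =>
    by_cases huZ : u ∈ Z
    · by_cases hall : ∀ w, G.Adj u w → w ≠ v → w ∈ Z
      · exact ⟨u, huZ, v, hvZ, huv, hall⟩
      · push Not at hall
        obtain ⟨w, huw, hwv, hwZ⟩ := hall
        exact ih_ws w huw hwv hwZ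
    · exact ih_u huZ

/-- Only `y` could force a vertex of `S`, and it never can: while `S` is white, `y` has two white
neighbours in it. -/
theorem notMem_of_entrance {S : Set V} {y w₁ w₂ : V}
    (hS : ∀ w ∈ S, ∀ z, G.Adj w z → z ∈ S ∨ z = y)
    (hw₁ : w₁ ∈ S) (hw₂ : w₂ ∈ S) (hne : w₁ ≠ w₂) (hyw₁ : G.Adj y w₁) (hyw₂ : G.Adj y w₂)
    (hZS : Disjoint Z S) {v : V} (hv : ZForced G Z v) : v ∉ S := by
  induction hv with
  | init hv => exact Set.disjoint_left.1 hZS hv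
  | @force u v huv _ _ ih_u ih_ws =>
    intro hvS
    obtain huS | rfl := hS v hvS u huv.symm
    · exact ih_u huS
    · by_cases hvw₁ : v = w₁
      · exact ih_ws w₂ hyw₂ (fun h => hne (hvw₁ ▸ h).symm) hw₂
      · exact ih_ws w₁ hyw₁ (Ne.symm hvw₁) hw₁

end ZForced

section Bridge

variable {G : SimpleGraph V}

theorem reachable_deleteEdges_of_adj {x y w z : V} (hwz : G.Adj w z) (hzy : z ≠ y)
    (hz : (G.deleteEdges {s(x, y)}).Reachable z y) :
    (G.deleteEdges {s(x, y)}).Reachable w y := by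
  by_cases he : s(w, z) = s(x, y)
  · obtain ⟨-, rfl⟩ | ⟨rfl, -⟩ := Sym2.eq_iff.1 he
    · exact absurd rfl hzy
    · exact Reachable.refl w
  · exact ((deleteEdges_adj ..).2 ⟨hwz, he⟩).reachable.trans hz

theorem not_isZeroForcingSet_of_not_reachable_deleteEdges [Fintype V] [DecidableRel G.Adj]
    {x y u : V} {Z : Set V} (hy : 3 ≤ G.degree y)
    (hu : ¬(G.deleteEdges {s(x, y)}).Reachable u y) (hZ : Z ⊆ insert u (G.neighborSet u)) :
    ¬IsZeroForcingSet G Z := by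
  classical
  intro hforce
  set S := {v | (G.deleteEdges {s(x, y)}).Reachable v y ∧ v ≠ y}
  obtain ⟨w₁, hw₁, w₂, hw₂, hne⟩ : ∃ w₁ ∈ (G.neighborFinset y).erase x,
      ∃ w₂ ∈ (G.neighborFinset y).erase x, w₁ ≠ w₂ := by
    have := Finset.pred_card_le_card_erase (s := G.neighborFinset y) (a := x)
    rw [card_neighborFinset_eq_degree] at this
    exact Finset.one_lt_card.1 (by omega)
  have hmem : ∀ w ∈ (G.neighborFinset y).erase x, G.Adj y w ∧ w ∈ S := by
    intro w hw
    obtain ⟨hwx, hyw⟩ : w ≠ x ∧ G.Adj y w := by simpa using hw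
    refine ⟨hyw, ?_, hyw.ne.symm⟩
    refine ((deleteEdges_adj ..).2 ⟨hyw, ?_⟩).reachable.symm
    simp [hwx, hyw.ne.symm]
  have hS : ∀ w ∈ S, ∀ z, G.Adj w z → z ∈ S ∨ z = y := by
    intro w hw z hwz
    by_cases hzy : z = y
    · exact .inr hzy
    · exact .inl ⟨reachable_deleteEdges_of_adj hwz.symm hw.2 hw.1, hzy⟩
  have hZS : Disjoint Z S := by
    refine Set.disjoint_left.2 fun z hz hzS => ?_
    obtain rfl | huz := hZ hz
    · exact hu hzS.1
    · exact hu (reachable_deleteEdges_of_adj huz hzS.2 hzS.1)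
  exact ZForced.notMem_of_entrance hS (hmem w₁ hw₁).2 (hmem w₂ hw₂).2 hne (hmem w₁ hw₁).1
    (hmem w₂ hw₂).1 hZS (hforce w₁) (hmem w₁ hw₁).2

end Bridge

section MinDegree

variable [Fintype V] {G : SimpleGraph V} [DecidableRel G.Adj]

theorem coe_subset_insert_neighborSet_of_card_le_degree {Z : Finset V} {u v : V} (hu : u ∈ Z)
    (huv : G.Adj u v) (hN : ∀ w, G.Adj u w → w ≠ v → w ∈ Z) (hcard : Z.card ≤ G.degree u) :
    (Z : Set V) ⊆ insert u (G.neighborSet u) := by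
  classical
  have hsub : insert u ((G.neighborFinset u).erase v) ⊆ Z := by
    refine Finset.insert_subset hu fun w hw => ?_
    obtain ⟨hwv, huw⟩ : w ≠ v ∧ G.Adj u w := by simpa using hw
    exact hN w huw hwv
  have hZ : insert u ((G.neighborFinset u).erase v) = Z := by
    refine Finset.eq_of_subset_of_card_le hsub ?_
    rw [Finset.card_insert_of_notMem (by simp), Finset.card_erase_of_mem (by simpa using huv),
      card_neighborFinset_eq_degree]
    have := huv.ne
    omega
  rw [← hZ]
  intro w hw
  simp only [Finset.coe_insert, Finset.coe_erase, coe_neighborFinset] at hw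
  exact Set.insert_subset_insert Set.sdiff_subset hw

theorem IsZeroForcingSet.exists_subset_insert_neighborSet [Nonempty V] {Z : Finset V}
    (hZ : IsZeroForcingSet G Z) (hcard : ∀ v, Z.card ≤ G.degree v) :
    ∃ u, (Z : Set V) ⊆ insert u (G.neighborSet u) := by
  obtain ⟨v⟩ := ‹Nonempty V›
  obtain ⟨v₀, -, hv₀⟩ := Finset.exists_mem_notMem_of_card_lt_card (t := Finset.univ)
    ((hcard v).trans_lt (G.degree_lt_card_verts v))
  obtain ⟨u, hu, v', -, huv', hN⟩ := (hZ v₀).exists_first_force (Finset.mem_coe.not.2 hv₀)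
  exact ⟨u, coe_subset_insert_neighborSet_of_card_le_degree hu huv' hN (hcard u)⟩

end MinDegree

theorem four_le_zeroForcingNumber_of_bridge_general {V : Type*} [Fintype V]
    (G : SimpleGraph V) [DecidableRel G.Adj]
    (hdeg : ∀ v : V, 3 ≤ G.degree v)
    (hbridge : ∃ e : Sym2 V, G.IsBridge e) :
    4 ≤ zeroForcingNumber G := by
  obtain ⟨e, he⟩ := hbridge
  cases e with | h x y
  have hxy := isBridge_iff.1 he
  have : Nonempty V := ⟨x⟩
  refine le_zeroForcingNumber fun Z hZ => ?_
  by_contra! hZ3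
  obtain ⟨u, hu⟩ :=
    hZ.exists_subset_insert_neighborSet fun v => (Nat.le_of_lt_succ hZ3).trans (hdeg v)
  by_cases huy : (G.deleteEdges {s(x, y)}).Reachable u y
  · have hux : ¬(G.deleteEdges {s(y, x)}).Reachable u x := by
      rw [Sym2.eq_swap]
      exact fun hux => hxy (hux.symm.trans huy)
    exact not_isZeroForcingSet_of_not_reachable_deleteEdges (hdeg x) hux hu hZ
  · exact not_isZeroForcingSet_of_not_reachable_deleteEdges (hdeg y) huy hu hZ

/-- If `G` is connected with minimum degree at least `3` and has a cut edge
(bridge), then `Z(G) ≥ 4`. -/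
theorem four_le_zeroForcingNumber_of_bridge {V : Type*} [Fintype V] [DecidableEq V]
    (G : SimpleGraph V) [DecidableRel G.Adj]
    (hconn : G.Connected) (hdeg : ∀ v : V, 3 ≤ G.degree v)
    (hbridge : ∃ e : Sym2 V, G.IsBridge e) :
    4 ≤ zeroForcingNumber G :=
  four_le_zeroForcingNumber_of_bridge_general G hdeg hbridge
end

section
/- Let G be a cubic (3-regular) graph and suppose some zero forcing process from a minimum zero forcing set Z of size 3 begins with a forcing vertex u whose neighborhood N(u) = {u1, u2, u3} is an independent set. Then no zero forcing process from Z can complete; hence if Z(G) = 3, the neighborhood of the first forcing vertex is not independent. -/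
open Matrix Finset

variable {V : Type*}

/-- Let `G` be a cubic graph and `Z = {u, u₁, u₂}` a set of size 3 where
`N(u) = {u₁, u₂, u₃}` and the neighborhood of the first forcing vertex `u`
is an independent set. Then no zero forcing process from `Z` can complete,
i.e. `Z` is not a zero forcing set for `G`. -/
theorem not_zeroForcingSet_of_independent_neighborhood
    {V : Type*} [Fintype V] [DecidableEq V]
    (G : SimpleGraph V) [DecidableRel G.Adj]
    (hcubic : ∀ v : V, G.degree v = 3)
    (u u₁ u₂ u₃ : V) (hN : G.neighborSet u = {u₁, u₂, u₃})
    (hindep : ¬G.Adj u₁ u₂ ∧ ¬G.Adj u₁ u₃ ∧ ¬G.Adj u₂ u₃)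
    (Z : Finset V) (hZ : (↑Z : Set V) = {u, u₁, u₂}) :
    ¬IsZeroForcingSet G ↑Z := by
  obtain ⟨h12, h13, h23⟩ := hindep
  intro hforce
  have hadj : ∀ x, x = u₁ ∨ x = u₂ ∨ x = u₃ → G.Adj u x := by
    intro x hx
    rw [← SimpleGraph.mem_neighborSet, hN]
    rcases hx with h | h | h <;> subst h <;> simp
  have htwo : ∀ x, x = u₁ ∨ x = u₂ ∨ x = u₃ →
      ∃ a b, a ≠ b ∧ G.Adj x a ∧ G.Adj x b ∧
        (a ∉ ({u, u₁, u₂, u₃} : Set V)) ∧ (b ∉ ({u, u₁, u₂, u₃} : Set V)) := by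
    intro x hx
    have hxu : G.Adj x u := (hadj x hx).symm
    have hcard : ((G.neighborFinset x).erase u).card = 2 := by
      rw [Finset.card_erase_of_mem (by simpa using hxu)]
      have : (G.neighborFinset x).card = 3 := by
        rw [SimpleGraph.card_neighborFinset_eq_degree]
        exact hcubic x
      omega
    obtain ⟨a, b, hab, hset⟩ := Finset.card_eq_two.mp hcard
    have ha : a ∈ (G.neighborFinset x).erase u := by rw [hset]; simp
    have hb : b ∈ (G.neighborFinset x).erase u := by rw [hset]; simp
    have hau := Finset.ne_of_mem_erase ha
    have hbu := Finset.ne_of_mem_erase hb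
    have haa : G.Adj x a := by simpa using Finset.mem_of_mem_erase ha
    have hba : G.Adj x b := by simpa using Finset.mem_of_mem_erase hb
    have hnot : ∀ c, G.Adj x c → c ≠ u → c ∉ ({u, u₁, u₂, u₃} : Set V) := by
      intro c hc hcu hcS
      simp only [Set.mem_insert_iff, Set.mem_singleton_iff] at hcS
      rcases hcS with rfl | rfl | rfl | rfl
      · exact hcu rfl
      all_goals rcases hx with rfl | rfl | rfl
      all_goals first
        | exact G.irrefl hc
        | exact h12 hc | exact h12 hc.symm
        | exact h13 hc | exact h13 hc.symm
        | exact h23 hc | exact h23 hc.symm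
    exact ⟨a, b, hab, haa, hba, hnot a haa hau, hnot b hba hbu⟩
  have key : ∀ v, ZForced G ↑Z v → v ∈ ({u, u₁, u₂, u₃} : Set V) := by
    intro v hv
    induction hv with
    | init h =>
        rw [hZ] at h
        simp only [Set.mem_insert_iff, Set.mem_singleton_iff] at h ⊢
        tauto
    | @force x v hxv h1 h2 ih1 ih2 =>
        by_contra hvS
        simp only [Set.mem_insert_iff, Set.mem_singleton_iff] at ih1
        rcases ih1 with rfl | hx
        · apply hvS
          have : v ∈ G.neighborSet x := hxv
          rw [hN] at this
          simp only [Set.mem_insert_iff, Set.mem_singleton_iff] at this ⊢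
          tauto
        · obtain ⟨a, b, hab, haa, hba, haS, hbS⟩ := htwo x hx
          rcases eq_or_ne a v with rfl | hav
          · exact hbS (ih2 b hba (fun h => hab h.symm))
          · exact haS (ih2 a haa hav)
  obtain ⟨a, b, -, -, -, haS, -⟩ := htwo u₁ (Or.inl rfl)
  exact haS (key a (hforce a))
end

section
/- Let T be a tree on n vertices with maximum degree at most 3. Then Z(T) ≤ n_3 + 2, where n_3 is the number of vertices of T of degree 3. -/
open Matrix Finset

variable {V : Type*}

/-! Root the graph at a vertex `r` and let every vertex force one of its children (its neighbours
one step farther from `r`); then only `r` and the remaining children need to start black. A non-root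
vertex of degree `d` has at most `d - 1` children, so it contributes at most one initially black
vertex, and only if `d = 3`; the root contributes at most two. -/

theorem isZeroForcingSet_of_rank {G : SimpleGraph V} {Z : Set V} (d : V → ℕ)
    (h : ∀ v ∉ Z, ∃ u, G.Adj u v ∧ d u < d v ∧ ∀ w, G.Adj u w → w ≠ v → w ∈ Z ∨ d w < d v) :
    IsZeroForcingSet G Z := by
  intro v
  induction hn : d v using Nat.strong_induction_on generalizing v with
  | _ n ih =>
    subst hn
    by_cases hv : v ∈ Z
    · exact .init hv
    obtain ⟨u, huv, hu, hw⟩ := h v hv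
    exact .force huv (ih _ hu u rfl) fun w huw hwv =>
      (hw w huw hwv).elim .init fun hlt => ih _ hlt w rfl

theorem Finset.exists_card_erase_eq {α : Type*} [DecidableEq α] [Nonempty α] (s : Finset α) :
    ∃ a, (s.erase a).card = s.card - 1 := by
  obtain ⟨a, ha⟩ | rfl := s.eq_empty_or_nonempty.symm
  · exact ⟨a, card_erase_of_mem ha⟩
  · exact ⟨Classical.arbitrary α, rfl⟩

namespace SimpleGraph

variable {G : SimpleGraph V}

theorem Connected.exists_adj_dist_add_one_eq (hG : G.Connected) {r v : V} (hv : v ≠ r) :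
    ∃ u, G.Adj u v ∧ G.dist r u + 1 = G.dist r v := by
  obtain ⟨p, hp⟩ := hG.exists_walk_length_eq_dist v r
  cases p with
  | nil => exact absurd rfl hv
  | cons hvu q =>
    refine ⟨_, hvu.symm, ?_⟩
    have := G.dist_le q.reverse
    have := hvu.symm.diff_dist_adj (u := r)
    rw [dist_comm, Walk.length_cons] at hp
    rw [Walk.length_reverse] at *
    omega

variable [Fintype V] [DecidableRel G.Adj]

variable (G) in
noncomputable def childFinset (r u : V) : Finset V :=
  (G.neighborFinset u).filter fun w => G.dist r w = G.dist r u + 1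

@[simp]
theorem mem_childFinset {r u w : V} :
    w ∈ G.childFinset r u ↔ G.Adj u w ∧ G.dist r w = G.dist r u + 1 := by
  simp [childFinset]

theorem card_childFinset_sub_one_le [DecidableEq V] (hG : G.Connected) (r : V) {u : V} (hu : G.degree u ≤ 3) :
    (G.childFinset r u).card - 1 ≤ (if G.degree u = 3 then 1 else 0) + if u = r then 1 else 0 := by
  have hle : (G.childFinset r u).card ≤ G.degree u :=
    card_neighborFinset_eq_degree G u ▸ card_le_card (filter_subset _ _)
  by_cases hur : u = r
  · split_ifs <;> omega
  -- the parent of `u` is a neighbour but not a child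
  obtain ⟨p, hpu, hp⟩ := hG.exists_adj_dist_add_one_eq hur
  have hlt : (G.childFinset r u).card < G.degree u := by
    rw [← card_neighborFinset_eq_degree]
    refine card_lt_card ((ssubset_iff_of_subset (filter_subset _ _)).2 ⟨p, ?_, ?_⟩)
    · simpa using hpu.symm
    · exact fun hp' => by have := (mem_childFinset.1 hp').2; omega
  split_ifs <;> omega

variable [DecidableEq V]

variable (G) in
noncomputable def bfsForcingSet (r : V) (ch : V → V) : Finset V :=
  insert r (univ.biUnion fun u => (G.childFinset r u).erase (ch u))

theorem isZeroForcingSet_bfsForcingSet (hG : G.Connected) (r : V) (ch : V → V) :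
    IsZeroForcingSet G (G.bfsForcingSet r ch) := by
  have mem_of_ne {u w} (hw : w ∈ G.childFinset r u) (hne : w ≠ ch u) :
      w ∈ G.bfsForcingSet r ch :=
    mem_insert_of_mem (mem_biUnion.2 ⟨u, mem_univ _, mem_erase.2 ⟨hne, hw⟩⟩)
  refine isZeroForcingSet_of_rank (G.dist r) fun v hv => ?_
  have hvr : v ≠ r := fun h => hv (h ▸ mem_insert_self _ _)
  obtain ⟨u, huv, hu⟩ := hG.exists_adj_dist_add_one_eq hvr
  have hv_ch : v = ch u := by
    by_contra hne
    exact hv (mem_of_ne (mem_childFinset.2 ⟨huv, hu.symm⟩) hne)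
  refine ⟨u, huv, by omega, fun w huw hwv => ?_⟩
  by_cases hw : G.dist r w = G.dist r u + 1
  · exact .inl (mem_of_ne (mem_childFinset.2 ⟨huw, hw⟩) (hv_ch ▸ hwv))
  · have := huw.diff_dist_adj (u := r)
    exact .inr (by omega)

theorem card_bfsForcingSet_le (r : V) (ch : V → V) :
    (G.bfsForcingSet r ch).card ≤ ∑ u, ((G.childFinset r u).erase (ch u)).card + 1 :=
  (card_insert_le _ _).trans (Nat.add_le_add_right card_biUnion_le 1)

end SimpleGraph

open SimpleGraph in
/-- For a tree `T` with maximum degree at most 3,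
`Z(T) ≤ n₃ + 2`, where `n₃` is the number of degree-3 vertices. -/
theorem zeroForcingNumber_tree_le {V : Type*} [Fintype V] [DecidableEq V]
    (T : SimpleGraph V) [DecidableRel T.Adj] (htree : T.IsTree)
    (hdeg : ∀ v : V, T.degree v ≤ 3) :
    zeroForcingNumber T ≤
      (Finset.univ.filter (fun v => T.degree v = 3)).card + 2 := by
  obtain ⟨r⟩ := htree.connected.nonempty
  have : Nonempty V := ⟨r⟩
  choose ch hch using fun u => (T.childFinset r u).exists_card_erase_eq
  calc zeroForcingNumber T ≤ (T.bfsForcingSet r ch).card :=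
        Nat.sInf_le ⟨_, rfl, isZeroForcingSet_bfsForcingSet htree.connected r ch⟩
    _ ≤ ∑ u, ((T.childFinset r u).card - 1) + 1 := by
      simpa only [hch] using card_bfsForcingSet_le (G := T) r ch
    _ ≤ ∑ u, ((if T.degree u = 3 then 1 else 0) + if u = r then 1 else 0) + 1 := by
      gcongr with u
      exact card_childFinset_sub_one_le htree.connected r (hdeg u)
    _ = _ := by rw [sum_add_distrib, ← card_filter]; simp
end

section
/- The Heawood graph has a zero forcing set of size 6; hence Z(Heawood) ≤ 6. -/
open Matrix Finset

variable {V : Type*}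

/-- The blocks of the Fano plane (0-indexed): (124),(136),(137),(156),(257),(345),(467). -/
def fanoBlocks : Fin 7 → Finset (Fin 7) :=
  ![{0, 1, 3}, {0, 2, 5}, {0, 2, 6}, {0, 4, 5}, {1, 4, 6}, {2, 3, 4}, {3, 5, 6}]

/-- Point `i` is incident with block `j`. -/
def heawoodRel (a b : Fin 7 ⊕ Fin 7) : Prop :=
  ∃ i j : Fin 7, a = Sum.inl i ∧ b = Sum.inr j ∧ i ∈ fanoBlocks j

/-- The Heawood graph: the bipartite incidence graph of the Fano plane. -/
def heawood : SimpleGraph (Fin 7 ⊕ Fin 7) := SimpleGraph.fromRel heawoodRel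

instance : DecidableRel heawoodRel := fun a b =>
  inferInstanceAs (Decidable (∃ i j : Fin 7, a = Sum.inl i ∧ b = Sum.inr j ∧ i ∈ fanoBlocks j))

instance : DecidableRel heawood.Adj := fun a b =>
  decidable_of_iff (a ≠ b ∧ (heawoodRel a b ∨ heawoodRel b a))
    (SimpleGraph.fromRel_adj heawoodRel a b).symm

section HeawoodZF

local notation "HZ" => ({Sum.inl 0, Sum.inl 1, Sum.inl 2, Sum.inr 0, Sum.inr 3, Sum.inr 5} : Finset (Fin 7 ⊕ Fin 7))

lemma heawood_zfs : IsZeroForcingSet heawood ↑HZ := by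
  have hp0 : ZForced heawood ↑HZ (Sum.inl 0) := ZForced.init (by simp)
  have hp1 : ZForced heawood ↑HZ (Sum.inl 1) := ZForced.init (by simp)
  have hp2 : ZForced heawood ↑HZ (Sum.inl 2) := ZForced.init (by simp)
  have hb0 : ZForced heawood ↑HZ (Sum.inr 0) := ZForced.init (by simp)
  have hb3 : ZForced heawood ↑HZ (Sum.inr 3) := ZForced.init (by simp)
  have hb5 : ZForced heawood ↑HZ (Sum.inr 5) := ZForced.init (by simp)
  have hp3 : ZForced heawood ↑HZ (Sum.inl 3) := by
    refine ZForced.force (u := Sum.inr 0) (by decide) hb0 ?_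
    intro w hw hne
    rcases w with w | w <;> fin_cases w <;>
      first
        | exact absurd hw (by decide)
        | exact absurd rfl hne
        | assumption
  have hp4 : ZForced heawood ↑HZ (Sum.inl 4) := by
    refine ZForced.force (u := Sum.inr 5) (by decide) hb5 ?_
    intro w hw hne
    rcases w with w | w <;> fin_cases w <;>
      first
        | exact absurd hw (by decide)
        | exact absurd rfl hne
        | assumption
  have hp5 : ZForced heawood ↑HZ (Sum.inl 5) := by
    refine ZForced.force (u := Sum.inr 3) (by decide) hb3 ?_
    intro w hw hne
    rcases w with w | w <;> fin_cases w <;>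
      first
        | exact absurd hw (by decide)
        | exact absurd rfl hne
        | assumption
  have hb4 : ZForced heawood ↑HZ (Sum.inr 4) := by
    refine ZForced.force (u := Sum.inl 1) (by decide) hp1 ?_
    intro w hw hne
    rcases w with w | w <;> fin_cases w <;>
      first
        | exact absurd hw (by decide)
        | exact absurd rfl hne
        | assumption
  have hb6 : ZForced heawood ↑HZ (Sum.inr 6) := by
    refine ZForced.force (u := Sum.inl 3) (by decide) hp3 ?_
    intro w hw hne
    rcases w with w | w <;> fin_cases w <;>
      first
        | exact absurd hw (by decide)
        | exact absurd rfl hne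
        | assumption
  have hp6 : ZForced heawood ↑HZ (Sum.inl 6) := by
    refine ZForced.force (u := Sum.inr 6) (by decide) hb6 ?_
    intro w hw hne
    rcases w with w | w <;> fin_cases w <;>
      first
        | exact absurd hw (by decide)
        | exact absurd rfl hne
        | assumption
  have hb1 : ZForced heawood ↑HZ (Sum.inr 1) := by
    refine ZForced.force (u := Sum.inl 5) (by decide) hp5 ?_
    intro w hw hne
    rcases w with w | w <;> fin_cases w <;>
      first
        | exact absurd hw (by decide)
        | exact absurd rfl hne
        | assumption
  have hb2 : ZForced heawood ↑HZ (Sum.inr 2) := by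
    refine ZForced.force (u := Sum.inl 6) (by decide) hp6 ?_
    intro w hw hne
    rcases w with w | w <;> fin_cases w <;>
      first
        | exact absurd hw (by decide)
        | exact absurd rfl hne
        | assumption
  intro v
  rcases v with v | v <;> fin_cases v <;> assumption

end HeawoodZF

/-- The Heawood graph has a zero forcing set of size 6; hence
`Z(Heawood) ≤ 6`. -/
theorem heawood_zeroForcingNumber_le_six :
    (∃ Z : Finset (Fin 7 ⊕ Fin 7), Z.card = 6 ∧ IsZeroForcingSet heawood ↑Z) ∧
      zeroForcingNumber heawood ≤ 6 := by
  have h : ∃ Z : Finset (Fin 7 ⊕ Fin 7), Z.card = 6 ∧ IsZeroForcingSet heawood ↑Z :=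
    ⟨_, by decide, heawood_zfs⟩
  exact ⟨h, Nat.sInf_le (by obtain ⟨Z, hc, hz⟩ := h; exact ⟨Z, hc, hz⟩)⟩
end

section
/- Let G_n be the 'necklace' cubic graph on n vertices (n divisible by 6) formed from n/3 beads arranged in a cycle, where each bead consists of 6 vertices: a connector vertex joined to two adjacent pairs of twin vertices as in Fig. 6 of the paper. Then the adjacency matrix of G_n has nullity at least n/3 + 2, so M(G_n) ≥ n/3 + 2. -/
open Matrix Finset

variable {V : Type*}

/-- The edges inside one bead of the necklace graph: a connector `0` joined to
the twin pair `{1, 2}`, each of `1, 2` joined to each of the twin pair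
`{3, 4}`, and `3, 4` joined to the outgoing connector `5`. -/
def beadEdges : List (Fin 6 × Fin 6) :=
  [(0, 1), (0, 2), (1, 3), (1, 4), (2, 3), (2, 4), (3, 5), (4, 5)]

/-- The adjacency relation of the necklace graph on `k` beads: bead-internal
edges, plus the outgoing connector `5` of bead `i` joined to the incoming
connector `0` of bead `i + 1` (cyclically). -/
def necklaceRel (k : ℕ) (a b : ZMod k × Fin 6) : Prop :=
  (a.1 = b.1 ∧ (a.2, b.2) ∈ beadEdges) ∨ (b.1 = a.1 + 1 ∧ a.2 = 5 ∧ b.2 = 0)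

/-- The cubic 'necklace' graph on `n = 6k` vertices made of `k` beads arranged
in a cycle. -/
def necklace (k : ℕ) [NeZero k] : SimpleGraph (ZMod k × Fin 6) :=
  SimpleGraph.fromRel (necklaceRel k)

instance (k : ℕ) : DecidableRel (necklaceRel k) := fun a b =>
  inferInstanceAs (Decidable ((a.1 = b.1 ∧ (a.2, b.2) ∈ beadEdges) ∨
    (b.1 = a.1 + 1 ∧ a.2 = 5 ∧ b.2 = 0)))

instance (k : ℕ) [NeZero k] : DecidableRel (necklace k).Adj := fun a b =>
  decidable_of_iff (a ≠ b ∧ (necklaceRel k a b ∨ necklaceRel k b a))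
    (SimpleGraph.fromRel_adj (necklaceRel k) a b).symm

section Aux

def beadAdj (s t : Fin 6) : Prop := (s, t) ∈ beadEdges ∨ (t, s) ∈ beadEdges

instance : DecidableRel beadAdj := fun s t => inferInstanceAs (Decidable (_ ∨ _))

lemma necklace_adj_iff (k : ℕ) [NeZero k] (j c : ZMod k) (t d : Fin 6) :
    (necklace k).Adj (j, t) (c, d) ↔
      (c = j ∧ beadAdj t d) ∨ (c = j + 1 ∧ t = 5 ∧ d = 0) ∨ (j = c + 1 ∧ d = 5 ∧ t = 0) := by
  rw [necklace, SimpleGraph.fromRel_adj]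
  have hne : ∀ t d : Fin 6, beadAdj t d → t ≠ d := by decide
  constructor
  · rintro ⟨-, h | h⟩
    · rcases h with ⟨h1, h2⟩ | ⟨h1, h2, h3⟩
      · exact Or.inl ⟨h1.symm, Or.inl h2⟩
      · exact Or.inr (Or.inl ⟨h1, h2, h3⟩)
    · rcases h with ⟨h1, h2⟩ | ⟨h1, h2, h3⟩
      · exact Or.inl ⟨h1, Or.inr h2⟩
      · exact Or.inr (Or.inr ⟨h1, h2, h3⟩)
  · intro h
    have htd : t ≠ d := by
      rcases h with ⟨-, h⟩ | ⟨-, h1, h2⟩ | ⟨-, h1, h2⟩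
      · exact hne _ _ h
      · simp [h1, h2]
      · simp [h1, h2]
    refine ⟨by simp [Prod.ext_iff, htd], ?_⟩
    rcases h with ⟨h1, h2 | h2⟩ | ⟨h1, h2, h3⟩ | ⟨h1, h2, h3⟩
    · exact Or.inl (Or.inl ⟨h1.symm, h2⟩)
    · exact Or.inr (Or.inl ⟨h1, h2⟩)
    · exact Or.inl (Or.inr ⟨h1, h2, h3⟩)
    · exact Or.inr (Or.inr ⟨h1, h2, h3⟩)

variable {k : ℕ} [NeZero k]

lemma nbr0 (j : ZMod k) : (necklace k).neighborFinset (j, 0) =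
    {((j : ZMod k), (1 : Fin 6)), (j, 2), (j - 1, 5)} := by
  ext ⟨c, d⟩
  rw [SimpleGraph.mem_neighborFinset, necklace_adj_iff]
  have : (j = c + 1) ↔ (c = j - 1) := by constructor <;> intro h <;> simp [h] <;> ring
  fin_cases d <;> simp [beadAdj, beadEdges, Prod.ext_iff, this] <;> tauto

lemma nbr1 (j : ZMod k) : (necklace k).neighborFinset (j, 1) =
    {((j : ZMod k), (0 : Fin 6)), (j, 3), (j, 4)} := by
  ext ⟨c, d⟩
  rw [SimpleGraph.mem_neighborFinset, necklace_adj_iff]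
  fin_cases d <;> simp [beadAdj, beadEdges, Prod.ext_iff]

lemma nbr2 (j : ZMod k) : (necklace k).neighborFinset (j, 2) =
    {((j : ZMod k), (0 : Fin 6)), (j, 3), (j, 4)} := by
  ext ⟨c, d⟩
  rw [SimpleGraph.mem_neighborFinset, necklace_adj_iff]
  fin_cases d <;> simp [beadAdj, beadEdges, Prod.ext_iff]

lemma nbr3 (j : ZMod k) : (necklace k).neighborFinset (j, 3) =
    {((j : ZMod k), (1 : Fin 6)), (j, 2), (j, 5)} := by
  ext ⟨c, d⟩
  rw [SimpleGraph.mem_neighborFinset, necklace_adj_iff]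
  fin_cases d <;> simp [beadAdj, beadEdges, Prod.ext_iff]

lemma nbr4 (j : ZMod k) : (necklace k).neighborFinset (j, 4) =
    {((j : ZMod k), (1 : Fin 6)), (j, 2), (j, 5)} := by
  ext ⟨c, d⟩
  rw [SimpleGraph.mem_neighborFinset, necklace_adj_iff]
  fin_cases d <;> simp [beadAdj, beadEdges, Prod.ext_iff]

lemma nbr5 (j : ZMod k) : (necklace k).neighborFinset (j, 5) =
    {((j : ZMod k), (3 : Fin 6)), (j, 4), (j + 1, 0)} := by
  ext ⟨c, d⟩
  rw [SimpleGraph.mem_neighborFinset, necklace_adj_iff]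
  fin_cases d <;> simp [beadAdj, beadEdges, Prod.ext_iff]

lemma sum_triple {α β : Type*} [DecidableEq α] [AddCommMonoid β] {a b c : α}
    (hab : a ≠ b) (hac : a ≠ c) (hbc : b ≠ c) (v : α → β) :
    ∑ p ∈ ({a, b, c} : Finset α), v p = v a + v b + v c := by
  rw [Finset.sum_insert (by simp [hab, hac]), Finset.sum_insert (by simp [hbc]),
    Finset.sum_singleton, add_assoc]

def tv (i : ZMod k) : ZMod k × Fin 6 → ℝ := fun p =>
  if p = (i, 1) then 1 else if p = (i, 2) then -1 else 0

def uv (i : ZMod k) : ZMod k × Fin 6 → ℝ := fun p =>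
  if p = (i, 3) then 1 else if p = (i, 4) then -1 else 0

def w1 : ZMod k × Fin 6 → ℝ := fun p =>
  if p.2 = 5 then 2 else if p.2 = 1 ∨ p.2 = 2 then -1 else 0

def w2 : ZMod k × Fin 6 → ℝ := fun p =>
  if p.2 = 0 then -2 else if p.2 = 3 ∨ p.2 = 4 then 1 else 0

lemma fin6_cases (t : Fin 6) : t = 0 ∨ t = 1 ∨ t = 2 ∨ t = 3 ∨ t = 4 ∨ t = 5 := by
  revert t; decide

lemma mv0 (v : ZMod k × Fin 6 → ℝ) (j : ZMod k) :
    ((necklace k).adjMatrix ℝ *ᵥ v) (j, 0) = v (j, 1) + v (j, 2) + v (j - 1, 5) := by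
  rw [SimpleGraph.adjMatrix_mulVec_apply, nbr0,
    sum_triple (by simp) (by simp [Prod.ext_iff]) (by simp [Prod.ext_iff])]

lemma mv1 (v : ZMod k × Fin 6 → ℝ) (j : ZMod k) :
    ((necklace k).adjMatrix ℝ *ᵥ v) (j, 1) = v (j, 0) + v (j, 3) + v (j, 4) := by
  rw [SimpleGraph.adjMatrix_mulVec_apply, nbr1,
    sum_triple (by simp) (by simp) (by simp)]

lemma mv2 (v : ZMod k × Fin 6 → ℝ) (j : ZMod k) :
    ((necklace k).adjMatrix ℝ *ᵥ v) (j, 2) = v (j, 0) + v (j, 3) + v (j, 4) := by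
  rw [SimpleGraph.adjMatrix_mulVec_apply, nbr2,
    sum_triple (by simp) (by simp) (by simp)]

lemma mv3 (v : ZMod k × Fin 6 → ℝ) (j : ZMod k) :
    ((necklace k).adjMatrix ℝ *ᵥ v) (j, 3) = v (j, 1) + v (j, 2) + v (j, 5) := by
  rw [SimpleGraph.adjMatrix_mulVec_apply, nbr3,
    sum_triple (by simp) (by simp) (by simp)]

lemma mv4 (v : ZMod k × Fin 6 → ℝ) (j : ZMod k) :
    ((necklace k).adjMatrix ℝ *ᵥ v) (j, 4) = v (j, 1) + v (j, 2) + v (j, 5) := by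
  rw [SimpleGraph.adjMatrix_mulVec_apply, nbr4,
    sum_triple (by simp) (by simp) (by simp)]

lemma mv5 (v : ZMod k × Fin 6 → ℝ) (j : ZMod k) :
    ((necklace k).adjMatrix ℝ *ᵥ v) (j, 5) = v (j, 3) + v (j, 4) + v (j + 1, 0) := by
  rw [SimpleGraph.adjMatrix_mulVec_apply, nbr5,
    sum_triple (by simp) (by simp [Prod.ext_iff]) (by simp [Prod.ext_iff])]

lemma mv_tv (i : ZMod k) : (necklace k).adjMatrix ℝ *ᵥ tv i = 0 := by
  funext p
  obtain ⟨j, t⟩ := p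
  rcases fin6_cases t with h | h | h | h | h | h <;> subst h <;>
    simp only [mv0, mv1, mv2, mv3, mv4, mv5, Pi.zero_apply, tv, Prod.mk.injEq] <;>
    simp <;> (try split_ifs <;> norm_num)

lemma mv_uv (i : ZMod k) : (necklace k).adjMatrix ℝ *ᵥ uv i = 0 := by
  funext p
  obtain ⟨j, t⟩ := p
  rcases fin6_cases t with h | h | h | h | h | h <;> subst h <;>
    simp only [mv0, mv1, mv2, mv3, mv4, mv5, Pi.zero_apply, uv, Prod.mk.injEq] <;>
    simp <;> (try split_ifs <;> norm_num)

lemma mv_w1 : (necklace k).adjMatrix ℝ *ᵥ (w1 : ZMod k × Fin 6 → ℝ) = 0 := by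
  funext p
  obtain ⟨j, t⟩ := p
  rcases fin6_cases t with h | h | h | h | h | h <;> subst h <;>
    simp only [mv0, mv1, mv2, mv3, mv4, mv5, Pi.zero_apply, w1] <;> simp <;> norm_num

lemma mv_w2 : (necklace k).adjMatrix ℝ *ᵥ (w2 : ZMod k × Fin 6 → ℝ) = 0 := by
  funext p
  obtain ⟨j, t⟩ := p
  rcases fin6_cases t with h | h | h | h | h | h <;> subst h <;>
    simp only [mv0, mv1, mv2, mv3, mv4, mv5, Pi.zero_apply, w2] <;> simp <;> norm_num

def fam : (ZMod k ⊕ ZMod k ⊕ Fin 2) → (ZMod k × Fin 6 → ℝ) :=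
  Sum.elim tv (Sum.elim uv ![w1, w2])

lemma fam_indep : LinearIndependent ℝ (fam (k := k)) := by
  rw [Fintype.linearIndependent_iff]
  intro g hg
  have hp : ∀ p : ZMod k × Fin 6, (∑ i : ZMod k ⊕ ZMod k ⊕ Fin 2, g i * fam i p) = 0 := by
    intro p
    have := congrFun hg p
    simpa [Finset.sum_apply] using this
  have h1 : g (Sum.inr (Sum.inr 0)) = 0 := by
    have := hp (0, 5)
    simp [fam, tv, uv, w1, w2, Fintype.sum_sum_type, Prod.mk.injEq, Prod.ext_iff,
      Fin.sum_univ_two] at this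
    linarith
  have h2 : g (Sum.inr (Sum.inr 1)) = 0 := by
    have := hp (0, 0)
    simp [fam, tv, uv, w1, w2, Fintype.sum_sum_type, Prod.mk.injEq, Prod.ext_iff,
      Fin.sum_univ_two] at this
    linarith
  rintro (m | m | m)
  · have := hp (m, 1)
    simp [fam, tv, uv, w1, w2, Fintype.sum_sum_type, Prod.mk.injEq, Prod.ext_iff,
      Fin.sum_univ_two, h1, h2] at this
    simpa using this
  · have := hp (m, 3)
    simp [fam, tv, uv, w1, w2, Fintype.sum_sum_type, Prod.mk.injEq, Prod.ext_iff,
      Fin.sum_univ_two, h1, h2] at this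
    simpa using this
  · fin_cases m
    · exact h1
    · exact h2

lemma fam_mem_ker (i : ZMod k ⊕ ZMod k ⊕ Fin 2) :
    fam i ∈ LinearMap.ker ((necklace k).adjMatrix ℝ).mulVecLin := by
  rw [LinearMap.mem_ker, Matrix.mulVecLin_apply]
  rcases i with m | m | m
  · exact mv_tv m
  · exact mv_uv m
  · fin_cases m
    · exact mv_w1
    · exact mv_w2

lemma ker_ge : 2 * k + 2 ≤
    Module.finrank ℝ (LinearMap.ker ((necklace k).adjMatrix ℝ).mulVecLin) := by
  let f' : (ZMod k ⊕ ZMod k ⊕ Fin 2) →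
      LinearMap.ker ((necklace k).adjMatrix ℝ).mulVecLin := fun i => ⟨fam i, fam_mem_ker i⟩
  have hcomp : (Submodule.subtype _) ∘ f' = fam := rfl
  have hind : LinearIndependent ℝ f' :=
    LinearIndependent.of_comp (Submodule.subtype _) (hcomp ▸ fam_indep)
  have hcard : Fintype.card (ZMod k ⊕ ZMod k ⊕ Fin 2) = 2 * k + 2 := by
    simp [ZMod.card]; ring
  calc 2 * k + 2 = Fintype.card (ZMod k ⊕ ZMod k ⊕ Fin 2) := hcard.symm
    _ ≤ _ := hind.fintype_card_le_finrank


end Aux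

/-- For the necklace graph on `n = 6k` vertices, the adjacency matrix has
nullity at least `n/3 + 2`, so `M(G) ≥ n/3 + 2`. -/
theorem necklace_nullity_ge (k : ℕ) [NeZero k] :
    Fintype.card (ZMod k × Fin 6) / 3 + 2 ≤ nullity ((necklace k).adjMatrix ℝ) ∧
    Fintype.card (ZMod k × Fin 6) / 3 + 2 ≤ maxNullity (necklace k) := by
  have hcard : Fintype.card (ZMod k × Fin 6) = 6 * k := by
    simp [ZMod.card]; ring
  set A := (necklace k).adjMatrix ℝ with hA
  have hrn : A.rank + Module.finrank ℝ (LinearMap.ker A.mulVecLin) = 6 * k := by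
    have h := LinearMap.finrank_range_add_finrank_ker A.mulVecLin
    rw [Module.finrank_fintype_fun_eq_card, hcard] at h
    exact h
  have hker := ker_ge (k := k)
  rw [← hA] at hker
  have h1 : Fintype.card (ZMod k × Fin 6) / 3 + 2 ≤ nullity A := by
    have hnull : 6 * k - A.rank = Module.finrank ℝ (LinearMap.ker A.mulVecLin) := by
      omega
    unfold nullity
    rw [hcard, hnull]
    omega
  refine ⟨h1, le_trans h1 ?_⟩
  have hmem : nullity A ∈ {m : ℕ | ∃ B : Matrix (ZMod k × Fin 6) (ZMod k × Fin 6) ℝ,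
      IsGraphMatrix (necklace k) B ∧ nullity B = m} :=
    ⟨A, ⟨SimpleGraph.isSymm_adjMatrix _, fun i j hij => by simp [hA]⟩, rfl⟩
  have hbdd : BddAbove {m : ℕ | ∃ B : Matrix (ZMod k × Fin 6) (ZMod k × Fin 6) ℝ,
      IsGraphMatrix (necklace k) B ∧ nullity B = m} := by
    refine ⟨Fintype.card (ZMod k × Fin 6), ?_⟩
    rintro x ⟨B, -, rfl⟩
    exact Nat.sub_le _ _
  exact le_csSup hbdd hmem
end
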